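/- Let q be a power of an odd prime, m a positive integer, and d := gcd(C(m,2), q−1) with d > 1. Let s1 be a nonzero F_q-linear combination of the elementary symmetric polynomials σ_m^0,…,σ_m^m, let λ ∈ F_q be nonzero, and set F := s1·v_m + λ·s1. Then the number of distinguished zeros of F in F_q^m satisfies |Z_D(F)| ≤ d·P(q,m)/(q−1) + m·P(q−1,m−1) (as an inequality of real numbers). -/

import Mathlib

open MvPolynomial

/-- The Vandermonde polynomial `v_m = ∏_{i<j} (x_i - x_j)` in `m` variables. -/
noncomputable def vand (K : Type*) [CommRing K] (m : ℕ) : MvPolynomial (Fin m) K :=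
  ∏ p ∈ Finset.univ.filter (fun p : Fin m × Fin m => p.1 < p.2), (X p.1 - X p.2)

/-- `s` is a linear combination of the elementary symmetric polynomials
`σ_m^0, …, σ_m^m`. -/
def IsElemSymmComb {K : Type*} [CommSemiring K] {m : ℕ}
    (s : MvPolynomial (Fin m) K) : Prop :=
  ∃ a : Fin (m + 1) → K, s = ∑ i : Fin (m + 1), C (a i) * esymm (Fin m) K (i : ℕ)

/-- `P(q,m) = C(q,m)·m!` (which is `0` when `m > q`). -/
def Pnum (q m : ℕ) : ℕ := q.choose m * m.factorial

lemma Pnum_eq (n k : ℕ) : Pnum n k = n.descFactorial k := by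
  rw [Pnum, Nat.descFactorial_eq_factorial_mul_choose, mul_comm]

section Helpers

set_option linter.unusedSectionVars false

variable {K : Type*} [CommSemiring K]

lemma msEsymm_zero (s : Multiset K) : s.esymm 0 = 1 := by
  simp [Multiset.esymm]

lemma msEsymm_big (s : Multiset K) {k : ℕ} (h : Multiset.card s < k) : s.esymm k = 0 := by
  simp [Multiset.esymm, Multiset.powersetCard_eq_empty _ h]

lemma msEsymm_cons (t : K) (s : Multiset K) (k : ℕ) :
    (t ::ₘ s).esymm (k + 1) = s.esymm (k + 1) + t * s.esymm k := by
  simp only [Multiset.esymm, Multiset.powersetCard_cons, Multiset.map_add, Multiset.sum_add,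
    Multiset.map_map]
  congr 1
  rw [← Multiset.sum_map_mul_left]
  exact congrArg _ (Multiset.map_congr rfl fun u _ => by simp)

lemma vals_cons {m : ℕ} (x' : Fin m → K) (t : K) :
    (Finset.univ.val.map (Fin.cons t x' : Fin (m+1) → K)) = t ::ₘ Finset.univ.val.map x' := by
  rw [Fin.univ_succ, Finset.cons_val, Multiset.map_cons, Fin.cons_zero, Finset.map_val,
    Multiset.map_map]
  exact congrArg _ (Multiset.map_congr rfl fun i _ => by simp)

lemma eval_esymm {m : ℕ} (x : Fin m → K) (k : ℕ) :
    eval x (esymm (Fin m) K k) = (Finset.univ.val.map x).esymm k := by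
  rw [Finset.esymm_map_val]
  simp only [esymm, map_sum]
  exact Finset.sum_congr rfl fun t _ => by rw [eval_prod]; simp

/-- The evaluated linear combination of elementary symmetric functions. -/
def SumE {m : ℕ} (a : Fin (m + 1) → K) (x : Fin m → K) : K :=
  ∑ i : Fin (m + 1), a i * (Finset.univ.val.map x).esymm (i : ℕ)

lemma eval_comb {m : ℕ} (a : Fin (m + 1) → K) (x : Fin m → K) :
    eval x (∑ i : Fin (m + 1), C (a i) * esymm (Fin m) K (i : ℕ)) = SumE a x := by
  rw [map_sum, SumE]
  exact Finset.sum_congr rfl fun i _ => by rw [eval_mul, eval_C, eval_esymm]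

lemma SumE_cons {m : ℕ} (a : Fin (m + 2) → K) (x' : Fin m → K) (t : K) :
    SumE a (Fin.cons t x') =
      SumE (a ∘ Fin.castSucc) x' + t * SumE (a ∘ Fin.succ) x' := by
  set M := Finset.univ.val.map x' with hMdef
  have hM : Multiset.card M = m := by simp [hMdef]
  have h1 : ∑ i : Fin (m + 2), a i * M.esymm (i : ℕ)
      = a 0 + ∑ i : Fin (m + 1), a i.succ * M.esymm ((i : ℕ) + 1) := by
    rw [Fin.sum_univ_succ]
    simp [msEsymm_zero]
  have h2 : ∑ i : Fin (m + 2), a i * M.esymm (i : ℕ)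
      = ∑ i : Fin (m + 1), a i.castSucc * M.esymm (i : ℕ) := by
    rw [Fin.sum_univ_castSucc]
    have : M.esymm ((Fin.last (m+1) : Fin (m+2)) : ℕ) = 0 :=
      msEsymm_big _ (by rw [hM]; simp)
    rw [this, mul_zero, add_zero]
    exact Finset.sum_congr rfl fun i _ => by rw [Fin.coe_castSucc]
  unfold SumE
  rw [vals_cons]
  calc ∑ i : Fin (m + 2), a i * (t ::ₘ M).esymm (i : ℕ)
      = a 0 + ∑ i : Fin (m + 1),
          (a i.succ * M.esymm ((i : ℕ) + 1) + t * (a i.succ * M.esymm (i : ℕ))) := by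
        rw [Fin.sum_univ_succ]
        simp only [Fin.val_zero, Fin.val_succ]
        rw [msEsymm_zero, mul_one]
        congr 1
        exact Finset.sum_congr rfl fun i _ => by
          rw [msEsymm_cons]; ring
    _ = (a 0 + ∑ i : Fin (m + 1), a i.succ * M.esymm ((i : ℕ) + 1))
          + t * ∑ i : Fin (m + 1), a i.succ * M.esymm (i : ℕ) := by
        rw [Finset.sum_add_distrib, Finset.mul_sum]; ring
    _ = ∑ i : Fin (m + 1), a (Fin.castSucc i) * M.esymm (i : ℕ)
          + t * ∑ i : Fin (m + 1), a i.succ * M.esymm (i : ℕ) := by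
        rw [← h1, h2]
    _ = _ := rfl

end Helpers

section Counting

set_option linter.unusedSectionVars false

variable {F : Type} [Field F] [Fintype F] [DecidableEq F]

lemma cardInj (m : ℕ) :
    (Finset.univ.filter (fun x : Fin m → F => Function.Injective x)).card
      = (Fintype.card F).descFactorial m := by
  classical
  rw [← Fintype.card_subtype]
  rw [Fintype.card_congr (Equiv.subtypeInjectiveEquivEmbedding (Fin m) F)]
  rw [Fintype.card_embedding_eq, Fintype.card_fin]

lemma card_pairs (m : ℕ) :
    (Finset.univ.filter (fun p : Fin m × Fin m => p.1 < p.2)).card = m.choose 2 := by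
  classical
  rw [Finset.card_eq_sum_card_fiberwise (f := Prod.snd) (t := Finset.univ)
    (fun x _ => Finset.mem_univ _)]
  have key : ∀ j : Fin m,
      ((Finset.univ.filter (fun p : Fin m × Fin m => p.1 < p.2)).filter
        (fun p => p.2 = j)).card = (j : ℕ) := by
    intro j
    have : ((Finset.univ.filter (fun p : Fin m × Fin m => p.1 < p.2)).filter
        (fun p => p.2 = j)) = (Finset.Iio j).map
          ⟨fun i => (i, j), fun _ _ h => (Prod.mk.injEq _ _ _ _ ▸ h).1⟩ := by
      ext p
      simp only [Finset.mem_filter, Finset.mem_univ, true_and, Finset.mem_map,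
        Function.Embedding.coeFn_mk, Finset.mem_Iio]
      constructor
      · rintro ⟨h1, h2⟩; exact ⟨p.1, h2 ▸ h1, by rw [← h2]; rfl⟩
      · rintro ⟨i, hi, rfl⟩; exact ⟨hi, rfl⟩
    rw [this, Finset.card_map, Fin.card_Iio]
  rw [Finset.sum_congr rfl fun j _ => key j]
  rw [Fin.sum_univ_eq_sum_range (fun i => i) m]
  rw [Finset.sum_range_id]
  rw [Nat.choose_two_right]

lemma eval_vand {m : ℕ} (x : Fin m → F) :
    eval x (vand F m) = ∏ p ∈ Finset.univ.filter (fun p : Fin m × Fin m => p.1 < p.2),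
      (x p.1 - x p.2) := by
  rw [vand, eval_prod]
  exact Finset.prod_congr rfl fun p _ => by rw [map_sub, eval_X, eval_X]

lemma eval_vand_smul {m : ℕ} (c : F) (x : Fin m → F) :
    eval (fun i => c * x i) (vand F m) = c ^ (m.choose 2) * eval x (vand F m) := by
  rw [eval_vand, eval_vand, ← card_pairs m, ← Finset.prod_const,
    ← Finset.prod_mul_distrib]
  exact Finset.prod_congr rfl fun p _ => by ring

/-- The number of units with `c ^ N = a` is at most `gcd N (q-1)`. -/
lemma card_pow_sol (N : ℕ) (hN : 0 < Nat.gcd N (Fintype.card F - 1)) (a : F) :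
    (Finset.univ.filter (fun c : Fˣ => (c : F) ^ N = a)).card
      ≤ Nat.gcd N (Fintype.card F - 1) := by
  classical
  set d := Nat.gcd N (Fintype.card F - 1) with hd
  rcases Finset.eq_empty_or_nonempty
    (Finset.univ.filter (fun c : Fˣ => (c : F) ^ N = a)) with he | ⟨c0, hc0⟩
  · rw [he]; simpa using Nat.zero_le d
  rw [Finset.mem_filter] at hc0
  have key : ∀ c : Fˣ, (c : F) ^ N = a →
      ((c * c0⁻¹ : Fˣ) : F) ∈ Polynomial.nthRoots d (1 : F) := by
    intro c hc
    rw [Polynomial.mem_nthRoots hN]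
    have hu : (c * c0⁻¹ : Fˣ) ^ N = 1 := by
      ext
      push_cast
      rw [mul_pow, hc]
      rw [inv_pow, ← hc0.2]
      field_simp
    have h1 : orderOf (c * c0⁻¹ : Fˣ) ∣ N := orderOf_dvd_of_pow_eq_one hu
    have h2 : orderOf (c * c0⁻¹ : Fˣ) ∣ Fintype.card F - 1 := by
      rw [← Fintype.card_units]
      exact orderOf_dvd_card
    have : (c * c0⁻¹ : Fˣ) ^ d = 1 := orderOf_dvd_iff_pow_eq_one.mp (Nat.dvd_gcd h1 h2)
    have h3 := congrArg (Units.val) this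
    rw [Units.val_pow_eq_pow_val] at h3
    exact h3
  calc (Finset.univ.filter (fun c : Fˣ => (c : F) ^ N = a)).card
      ≤ (Polynomial.nthRoots d (1:F)).toFinset.card := by
        apply Finset.card_le_card_of_injOn (fun c => ((c * c0⁻¹ : Fˣ) : F))
        · intro c hc
          rw [Finset.mem_coe, Multiset.mem_toFinset]
          exact key c (Finset.mem_filter.mp (Finset.mem_coe.mp hc)).2
        · intro c₁ _ c₂ _ h
          have : (c₁ * c0⁻¹ : Fˣ) = (c₂ * c0⁻¹ : Fˣ) := Units.ext h
          exact mul_right_cancel this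
    _ ≤ Multiset.card (Polynomial.nthRoots d (1:F)) := Multiset.toFinset_card_le _
    _ ≤ d := Polynomial.card_nthRoots d 1

lemma partA {m : ℕ} (μ : F) (hμ : μ ≠ 0)
    (hN : 0 < Nat.gcd (m.choose 2) (Fintype.card F - 1)) :
    (Fintype.card F - 1) *
      (Finset.univ.filter (fun x : Fin m → F =>
        Function.Injective x ∧ eval x (vand F m) = μ)).card
    ≤ Nat.gcd (m.choose 2) (Fintype.card F - 1) * (Fintype.card F).descFactorial m := by
  classical
  set N := m.choose 2
  set d := Nat.gcd N (Fintype.card F - 1) with hd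
  set Zv := Finset.univ.filter (fun x : Fin m → F =>
      Function.Injective x ∧ eval x (vand F m) = μ) with hZv
  set s : Finset (Fˣ × (Fin m → F)) := Finset.univ ×ˢ Zv with hs
  set f : Fˣ × (Fin m → F) → (Fin m → F) := fun p i => (p.1 : F) * p.2 i with hf
  have hcards : s.card = (Fintype.card F - 1) * Zv.card := by
    rw [hs, Finset.card_product, Finset.card_univ, Fintype.card_units]
  have hbound : s.card ≤ d * (s.image f).card := by
    apply Finset.card_le_mul_card_image
    intro y hy
    apply le_trans _ (card_pow_sol N hN (eval y (vand F m) * μ⁻¹))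
    apply Finset.card_le_card_of_injOn (fun p => p.1)
    · rintro ⟨c, x⟩ hp
      simp only [Finset.mem_coe, Finset.mem_filter, hs, Finset.mem_product, Finset.mem_univ, true_and,
        hZv] at hp
      obtain ⟨⟨hinj, hevx⟩, hfp⟩ := hp
      have : eval y (vand F m) = (c : F) ^ N * μ := by
        rw [← hfp, hf, eval_vand_smul, hevx]
      rw [Finset.mem_coe, Finset.mem_filter]
      refine ⟨Finset.mem_univ _, ?_⟩
      rw [this]
      field_simp
    · rintro ⟨c₁, x₁⟩ h₁ ⟨c₂, x₂⟩ h₂ h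
      simp only at h
      subst h
      simp only [Finset.mem_coe, Finset.mem_filter] at h₁ h₂
      have hx : x₁ = x₂ := by
        funext i
        have := congrFun (h₁.2.trans h₂.2.symm) i
        exact mul_left_cancel₀ (Units.ne_zero c₁) this
      rw [hx]
  have himg : (s.image f).card ≤ (Fintype.card F).descFactorial m := by
    rw [← cardInj m]
    apply Finset.card_le_card
    intro y hy
    rw [Finset.mem_image] at hy
    obtain ⟨⟨c, x⟩, hp, rfl⟩ := hy
    simp only [hs, Finset.mem_product, Finset.mem_univ, true_and, hZv,
      Finset.mem_filter] at hp
    rw [Finset.mem_filter]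
    refine ⟨Finset.mem_univ _, ?_⟩
    exact fun i j hij => hp.1 (mul_left_cancel₀ (Units.ne_zero c) hij)
  calc (Fintype.card F - 1) * Zv.card = s.card := hcards.symm
    _ ≤ d * (s.image f).card := hbound
    _ ≤ d * (Fintype.card F).descFactorial m := Nat.mul_le_mul_left _ himg

lemma arith1 (q k e : ℕ) (hqe : q = k + 2 + e) :
    (k+1) * ((q-1).descFactorial k) * e + q.descFactorial (k+1)
      ≤ (k+2) * ((q-1).descFactorial (k+1)) := by
  have h1 : q.descFactorial (k+1) = q * (q-1).descFactorial k := by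
    conv_lhs => rw [show q = (q-1)+1 by omega]
    rw [Nat.succ_descFactorial_succ, show q-1+1 = q by omega]
  have h2 : (q-1).descFactorial (k+1) = (e+1) * (q-1).descFactorial k := by
    rw [Nat.descFactorial_succ, show q-1-k = e+1 by omega]
  rw [h1, h2, hqe]
  apply Nat.le_of_eq
  ring

lemma arith2 (q k e : ℕ) (hqe : q = k + 2 + e) :
    (k+1) * ((q-1).descFactorial k) * (e+1) ≤ (k+2) * ((q-1).descFactorial (k+1)) := by
  have h2 : (q-1).descFactorial (k+1) = (e+1) * (q-1).descFactorial k := by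
    rw [Nat.descFactorial_succ, show q-1-k = e+1 by omega]
  rw [h2]
  calc (k+1) * ((q-1).descFactorial k) * (e+1)
      = (k+1) * ((e+1) * (q-1).descFactorial k) := by ring
    _ ≤ (k+2) * ((e+1) * (q-1).descFactorial k) :=
        Nat.mul_le_mul_right _ (by omega)
lemma keyB (q : ℕ) (hq : Fintype.card F = q) :
    ∀ (m : ℕ) (a : Fin (m + 1) → F), a ≠ 0 →
    (Finset.univ.filter (fun x : Fin m → F =>
        Function.Injective x ∧ SumE a x = 0)).card
      ≤ m * (q - 1).descFactorial (m - 1) := by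
  intro m
  induction m with
  | zero =>
    intro a ha
    rw [Nat.zero_mul, Nat.le_zero, Finset.card_eq_zero, Finset.filter_eq_empty_iff]
    intro x _
    rintro ⟨-, h0⟩
    apply ha
    have : SumE a x = a 0 := by
      rw [SumE, Fin.sum_univ_one]
      simp [msEsymm_zero]
    rw [this] at h0
    funext i
    rw [Fin.eq_zero i]
    exact h0
  | succ m ih =>
    intro a ha
    by_cases hsmall : q < m + 1
    · rw [Finset.card_eq_zero.mpr, ]
      · exact Nat.zero_le _
      rw [Finset.filter_eq_empty_iff]
      rintro x _ ⟨hinj, -⟩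
      have := Fintype.card_le_of_injective x hinj
      rw [hq, Fintype.card_fin] at this
      omega
    have hq2 : m + 1 ≤ q := by omega
    obtain ⟨e, he⟩ : ∃ e, q = m + 1 + e := ⟨q - (m + 1), by omega⟩
    -- the fiber count
    set n : (Fin m → F) → ℕ := fun x' =>
      (Finset.univ.filter (fun t : F => Function.Injective (Fin.cons t x') ∧
        SumE a (Fin.cons t x') = 0)).card with hn
    have hsplit : (Finset.univ.filter (fun x : Fin (m+1) → F =>
        Function.Injective x ∧ SumE a x = 0)).card = ∑ x' : Fin m → F, n x' := by
      rw [Finset.card_eq_sum_card_fiberwise (f := Fin.tail) (t := Finset.univ)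
        (fun x _ => Finset.mem_univ _)]
      refine Finset.sum_congr rfl fun x' _ => ?_
      refine Finset.card_bij (fun x _ => x 0) ?_ ?_ ?_
      · rintro x hx
        rw [Finset.mem_filter] at hx ⊢
        obtain ⟨hx1, htail⟩ := hx
        rw [Finset.mem_filter] at hx1
        obtain ⟨-, hinj, hsum⟩ := hx1
        have hcons : Fin.cons (x 0) x' = x := by rw [← htail, Fin.cons_self_tail]
        exact ⟨Finset.mem_univ _, by rw [hcons]; exact hinj, by rw [hcons]; exact hsum⟩
      · rintro x hx y hy h
        rw [Finset.mem_filter] at hx hy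
        funext i
        induction i using Fin.cases with
        | zero => exact h
        | succ j => exact (congrFun (hx.2.trans hy.2.symm) j : _)
      · rintro t ht
        rw [Finset.mem_filter] at ht
        have hmem : Fin.cons t x' ∈ (Finset.univ.filter (fun x : Fin (m+1) → F =>
            Function.Injective x ∧ SumE a x = 0)).filter (fun x => Fin.tail x = x') := by
          rw [Finset.mem_filter, Finset.mem_filter]
          exact ⟨⟨Finset.mem_univ _, ht.2⟩, Fin.tail_cons _ _⟩
        exact ⟨Fin.cons t x', hmem, by simp⟩
    -- generic bounds on fibers
    have factA : ∀ x' : Fin m → F, ¬ Function.Injective x' → n x' = 0 := by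
      intro x' hninj
      rw [hn, Finset.card_eq_zero, Finset.filter_eq_empty_iff]
      rintro t _ ⟨hinj, -⟩
      exact hninj (Fin.cons_injective_iff.mp hinj).2
    have factC : ∀ x' : Fin m → F, Function.Injective x' → n x' ≤ e + 1 := by
      intro x' hinj
      have hsub : (Finset.univ.filter (fun t : F => Function.Injective (Fin.cons t x') ∧
          SumE a (Fin.cons t x') = 0)) ⊆ Finset.univ \ (Finset.univ.image x') := by
        intro t ht
        rw [Finset.mem_filter] at ht
        rw [Finset.mem_sdiff]
        refine ⟨Finset.mem_univ _, fun hmem => ?_⟩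
        obtain ⟨i, -, hi⟩ := Finset.mem_image.mp hmem
        exact (Fin.cons_injective_iff.mp ht.2.1).1 ⟨i, hi⟩
      calc n x' ≤ (Finset.univ \ (Finset.univ.image x')).card := Finset.card_le_card hsub
        _ = q - m := by
          rw [Finset.card_sdiff_of_subset (Finset.subset_univ _), Finset.card_image_of_injective _ hinj,
            Finset.card_univ, Finset.card_univ, hq, Fintype.card_fin]
        _ ≤ e + 1 := by omega
    have factB : ∀ x' : Fin m → F, SumE (a ∘ Fin.succ) x' ≠ 0 → n x' ≤ 1 := by
      intro x' hB
      rw [hn]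
      apply Finset.card_le_one.mpr
      intro t1 h1 t2 h2
      rw [Finset.mem_filter] at h1 h2
      have e1 := h1.2.2; have e2 := h2.2.2
      rw [SumE_cons] at e1 e2
      have : t1 * SumE (a ∘ Fin.succ) x' = t2 * SumE (a ∘ Fin.succ) x' := by
        linear_combination e1 - e2
      exact mul_right_cancel₀ hB this
    have factD : ∀ x' : Fin m → F, a ∘ Fin.succ = 0 →
        SumE (a ∘ Fin.castSucc) x' ≠ 0 → n x' = 0 := by
      intro x' hb0 hA
      rw [hn, Finset.card_eq_zero, Finset.filter_eq_empty_iff]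
      rintro t _ ⟨-, hsum⟩
      rw [SumE_cons, hb0] at hsum
      have hz : SumE (0 : Fin (m+1) → F) x' = 0 := by simp [SumE]
      rw [hz, mul_zero, add_zero] at hsum
      exact hA hsum
    rw [hsplit, Nat.add_sub_cancel]
    by_cases hb : a ∘ Fin.succ = 0
    · -- the "B = 0" case
      have ha0 : a 0 ≠ 0 := by
        intro h0
        apply ha
        funext i
        induction i using Fin.cases with
        | zero => exact h0
        | succ j => exact congrFun hb j
      have ha' : a ∘ Fin.castSucc ≠ 0 := by
        intro h
        apply ha0
        have := congrFun h 0
        simpa using this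
      have hSa := ih (a ∘ Fin.castSucc) ha'
      set Sa := Finset.univ.filter (fun x' : Fin m → F =>
        Function.Injective x' ∧ SumE (a ∘ Fin.castSucc) x' = 0) with hSa_def
      have hpoint : ∀ x' : Fin m → F, n x' ≤ if x' ∈ Sa then e + 1 else 0 := by
        intro x'
        by_cases hinj : Function.Injective x'
        · by_cases hA : SumE (a ∘ Fin.castSucc) x' = 0
          · rw [if_pos (by rw [hSa_def, Finset.mem_filter]; exact ⟨Finset.mem_univ _, hinj, hA⟩)]
            exact factC x' hinj
          · rw [factD x' hb hA]; exact Nat.zero_le _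
        · rw [factA x' hinj]; exact Nat.zero_le _
      calc ∑ x' : Fin m → F, n x' ≤ ∑ x' : Fin m → F, if x' ∈ Sa then e + 1 else 0 :=
            Finset.sum_le_sum (fun x' _ => hpoint x')
        _ = Sa.card * (e+1) := by
            rw [Finset.sum_ite_mem, Finset.univ_inter, Finset.sum_const, smul_eq_mul]
        _ ≤ (m * (q - 1).descFactorial (m - 1)) * (e+1) := Nat.mul_le_mul_right _ hSa
        _ ≤ (m + 1) * (q - 1).descFactorial m := by
            rcases m with - | k
            · simp
            · exact arith2 q k e (by omega)
    · -- the "B ≠ 0" case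
      have hSb := ih (a ∘ Fin.succ) hb
      set Sb := Finset.univ.filter (fun x' : Fin m → F =>
        Function.Injective x' ∧ SumE (a ∘ Fin.succ) x' = 0) with hSb_def
      set A2 := Finset.univ.filter (fun x' : Fin m → F =>
        Function.Injective x' ∧ ¬ (SumE (a ∘ Fin.succ) x' = 0)) with hA2_def
      have hpoint : ∀ x' : Fin m → F,
          n x' ≤ (if x' ∈ Sb then e + 1 else 0) + (if x' ∈ A2 then 1 else 0) := by
        intro x'
        by_cases hinj : Function.Injective x'
        · by_cases hB0 : SumE (a ∘ Fin.succ) x' = 0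
          · rw [if_pos (by rw [hSb_def, Finset.mem_filter]; exact ⟨Finset.mem_univ _, hinj, hB0⟩),
              if_neg (by rw [hA2_def, Finset.mem_filter]; rintro ⟨-, -, hc⟩; exact hc hB0)]
            rw [Nat.add_zero]
            exact factC x' hinj
          · rw [if_neg (by rw [hSb_def, Finset.mem_filter]; rintro ⟨-, -, hc⟩; exact hB0 hc),
              if_pos (by rw [hA2_def, Finset.mem_filter]; exact ⟨Finset.mem_univ _, hinj, hB0⟩)]
            rw [Nat.zero_add]
            exact factB x' hB0
        · rw [factA x' hinj]; exact Nat.zero_le _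
      have hpart : Sb.card + A2.card = q.descFactorial m := by
        have hce := Finset.card_filter_add_card_filter_not
          (s := Finset.univ.filter (fun x' : Fin m → F => Function.Injective x'))
          (p := fun x' => SumE (a ∘ Fin.succ) x' = 0)
        rw [Finset.filter_filter, Finset.filter_filter] at hce
        rw [hSb_def, hA2_def, hce, cardInj, hq]
      calc ∑ x' : Fin m → F, n x'
          ≤ ∑ x' : Fin m → F, ((if x' ∈ Sb then e + 1 else 0) + (if x' ∈ A2 then 1 else 0)) :=
            Finset.sum_le_sum (fun x' _ => hpoint x')
        _ = Sb.card * (e+1) + A2.card := by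
            rw [Finset.sum_add_distrib, Finset.sum_ite_mem, Finset.sum_ite_mem,
              Finset.univ_inter, Finset.univ_inter, Finset.sum_const, Finset.sum_const,
              smul_eq_mul, smul_eq_mul, Nat.mul_one]
        _ = Sb.card * e + (Sb.card + A2.card) := by ring
        _ ≤ (m * (q - 1).descFactorial (m - 1)) * e + q.descFactorial m := by
            rw [hpart]
            exact Nat.add_le_add_right (Nat.mul_le_mul_right _ hSb) _
        _ ≤ (m + 1) * (q - 1).descFactorial m := by
            rcases m with - | k
            · simp [Nat.descFactorial]
            · exact arith1 q k e (by omega)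

end Counting

/-- Linearly dependent case, `d = gcd(C(m,2), q-1) > 1`: bound on the number of
distinguished zeros of `F = s1·v_m + λ·s1`. -/
theorem stmt7 (q m : ℕ) (F : Type) [Field F] [Fintype F]
    (hcard : Fintype.card F = q)
    (hq : ∃ p n : ℕ, p.Prime ∧ Odd p ∧ 0 < n ∧ q = p ^ n)
    (hm : 0 < m) (hgcd : 1 < Nat.gcd (m.choose 2) (q - 1))
    (s1 : MvPolynomial (Fin m) F) (hs1 : IsElemSymmComb s1) (hs1ne : s1 ≠ 0)
    (lam : F) (hlam : lam ≠ 0) :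
    (Set.ncard {x : Fin m → F | Function.Injective x ∧
        eval x (s1 * vand F m + C lam * s1) = 0} : ℝ)
      ≤ (Nat.gcd (m.choose 2) (q - 1) : ℝ) * (Pnum q m : ℝ) / ((q : ℝ) - 1)
        + (m : ℝ) * (Pnum (q - 1) (m - 1) : ℝ) := by
  classical
  obtain ⟨a, ha⟩ := hs1
  have haa : a ≠ 0 := by
    intro h
    apply hs1ne
    rw [ha, h]
    simp
  have h2q : 2 ≤ q := by rw [← hcard]; exact Fintype.one_lt_card
  -- set splitting
  have hsub : {x : Fin m → F | Function.Injective x ∧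
        eval x (s1 * vand F m + C lam * s1) = 0}
      ⊆ {x : Fin m → F | Function.Injective x ∧ eval x s1 = 0}
        ∪ {x : Fin m → F | Function.Injective x ∧ eval x (vand F m) = -lam} := by
    rintro x ⟨hinj, hev⟩
    rw [map_add, eval_mul, eval_mul, eval_C] at hev
    have hfac : eval x s1 * (eval x (vand F m) + lam) = 0 := by linear_combination hev
    rcases mul_eq_zero.mp hfac with h | h
    · exact Or.inl ⟨hinj, h⟩
    · exact Or.inr ⟨hinj, by linear_combination h⟩
  have hncards : ∀ p : (Fin m → F) → Prop,
      {x : Fin m → F | p x}.ncard = (Finset.univ.filter p).card := by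
    intro p
    rw [← Set.ncard_coe_finset]
    congr 1
    ext x
    simp
  have hmain : Set.ncard {x : Fin m → F | Function.Injective x ∧
        eval x (s1 * vand F m + C lam * s1) = 0}
      ≤ (Finset.univ.filter (fun x : Fin m → F =>
          Function.Injective x ∧ eval x s1 = 0)).card
        + (Finset.univ.filter (fun x : Fin m → F =>
          Function.Injective x ∧ eval x (vand F m) = -lam)).card := by
    calc Set.ncard {x : Fin m → F | Function.Injective x ∧
          eval x (s1 * vand F m + C lam * s1) = 0}
        ≤ Set.ncard ({x : Fin m → F | Function.Injective x ∧ eval x s1 = 0}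
          ∪ {x : Fin m → F | Function.Injective x ∧ eval x (vand F m) = -lam}) :=
          Set.ncard_le_ncard hsub (Set.toFinite _)
      _ ≤ Set.ncard {x : Fin m → F | Function.Injective x ∧ eval x s1 = 0}
          + Set.ncard {x : Fin m → F | Function.Injective x ∧ eval x (vand F m) = -lam} :=
          Set.ncard_union_le _ _
      _ = _ := by rw [hncards, hncards]; congr!
  -- bound for the s1 - zeros
  have hZs : (Finset.univ.filter (fun x : Fin m → F =>
      Function.Injective x ∧ eval x s1 = 0)).card ≤ m * Pnum (q - 1) (m - 1) := by
    rw [Pnum_eq]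
    have := keyB q hcard m a haa
    apply le_trans _ this
    apply Nat.le_of_eq
    congr 1
    apply Finset.filter_congr
    intro x _
    rw [ha, eval_comb]
  -- bound for the vand - zeros
  have hZv : (q - 1) * (Finset.univ.filter (fun x : Fin m → F =>
      Function.Injective x ∧ eval x (vand F m) = -lam)).card
      ≤ Nat.gcd (m.choose 2) (q - 1) * Pnum q m := by
    rw [Pnum_eq]
    have := partA (F := F) (m := m) (-lam) (neg_ne_zero.mpr hlam)
      (by rw [hcard]; omega)
    rw [hcard] at this
    exact this
  -- put everything together over ℝ
  have hq1 : (0 : ℝ) < (q : ℝ) - 1 := by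
    have : (2 : ℝ) ≤ (q : ℝ) := by exact_mod_cast h2q
    linarith
  set Zs := (Finset.univ.filter (fun x : Fin m → F =>
      Function.Injective x ∧ eval x s1 = 0)).card
  set Zv := (Finset.univ.filter (fun x : Fin m → F =>
      Function.Injective x ∧ eval x (vand F m) = -lam)).card
  have hZvR : (Zv : ℝ) ≤ (Nat.gcd (m.choose 2) (q - 1) : ℝ) * (Pnum q m : ℝ) / ((q : ℝ) - 1) := by
    rw [le_div_iff₀ hq1]
    have hcast : ((q : ℝ) - 1) = ((q - 1 : ℕ) : ℝ) := by
      rw [Nat.cast_sub (by omega)]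
      norm_num
    rw [hcast]
    calc (Zv : ℝ) * ((q - 1 : ℕ) : ℝ) = (((q - 1) * Zv : ℕ) : ℝ) := by
          push_cast; ring
      _ ≤ ((Nat.gcd (m.choose 2) (q - 1) * Pnum q m : ℕ) : ℝ) := by
          exact_mod_cast hZv
      _ = _ := by push_cast; ring
  have hZsR : (Zs : ℝ) ≤ (m : ℝ) * (Pnum (q - 1) (m - 1) : ℝ) := by
    exact_mod_cast hZs
  have hmainR : (Set.ncard {x : Fin m → F | Function.Injective x ∧
      eval x (s1 * vand F m + C lam * s1) = 0} : ℝ) ≤ (Zs : ℝ) + (Zv : ℝ) := by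
    exact_mod_cast hmain
  linarith
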